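/- arXiv:2603.05496 — 3 statements merged into one kernel-verified Lean document; each statement's English description precedes it below -/
import Mathlib

section
/- Let G be a finite group and A, B ⊆ G such that A⁻¹B ⊆ Z(G), where A⁻¹ := {a⁻¹ | a ∈ A}, A⁻¹B := {a⁻¹b | a ∈ A, b ∈ B}, and Z(G) is the center of G. Then for all g, h ∈ G, |Ag ∩ Bh⁻¹| = |Ah ∩ Bg⁻¹|. -/
lemma stmt_2_aux {G : Type*} [Group G] [Fintype G] [DecidableEq G]
    {A B : Finset G}
    (hAB : ∀ a ∈ A, ∀ b ∈ B, a⁻¹ * b ∈ Subgroup.center G) (g h : G)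
    (hne : (A.image (· * g) ∩ B.image (· * h⁻¹)).Nonempty) : g * h = h * g := by
  obtain ⟨x, hx⟩ := hne
  rw [Finset.mem_inter, Finset.mem_image, Finset.mem_image] at hx
  obtain ⟨⟨a, ha, hag⟩, ⟨b, hb, hbh⟩⟩ := hx
  have hz := hAB a ha b hb
  rw [Subgroup.mem_center_iff] at hz
  have hab : a⁻¹ * b = g * h := by
    have : b = a * g * h := by
      rw [← hag] at hbh
      rw [← hbh]; group
    rw [this]; group
  have := hz g
  rw [hab, mul_assoc] at this
  exact mul_left_cancel this

theorem stmt_2 {G : Type*} [Group G] [Fintype G] [DecidableEq G]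
    (A B : Finset G)
    (hAB : ∀ a ∈ A, ∀ b ∈ B, a⁻¹ * b ∈ Subgroup.center G) :
    ∀ g h : G,
      (A.image (· * g) ∩ B.image (· * h⁻¹)).card
        = (A.image (· * h) ∩ B.image (· * g⁻¹)).card := by
  intro g h
  by_cases hc : g * h = h * g
  · have hcom : Commute g h := hc
    have hx : ∀ b : G, b * h⁻¹ * (g⁻¹ * h) = b * g⁻¹ := by
      intro b
      have h1 : g⁻¹ * h = h * g⁻¹ := hcom.inv_left.eq
      rw [mul_assoc, h1, ← mul_assoc h⁻¹, inv_mul_cancel, one_mul]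
    have key : (A.image (· * g) ∩ B.image (· * h⁻¹)).image (· * (g⁻¹ * h))
        = A.image (· * h) ∩ B.image (· * g⁻¹) := by
      rw [Finset.image_inter _ _ (mul_left_injective _), Finset.image_image,
        Finset.image_image]
      congr 1
      · apply Finset.image_congr
        intro a _
        simp only [Function.comp_apply]
        group
      · apply Finset.image_congr
        intro b _
        simp only [Function.comp_apply]
        exact hx b
    rw [← key, Finset.card_image_of_injective _ (mul_left_injective _)]
  · have e1 : A.image (· * g) ∩ B.image (· * h⁻¹) = ∅ := by
      rw [← Finset.not_nonempty_iff_eq_empty]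
      intro hne
      exact hc (stmt_2_aux hAB g h hne)
    have e2 : A.image (· * h) ∩ B.image (· * g⁻¹) = ∅ := by
      rw [← Finset.not_nonempty_iff_eq_empty]
      intro hne
      exact hc (stmt_2_aux hAB h g hne).symm
    rw [e1, e2]
end

section
/- Let G be a finite group and A, B ⊆ G such that AB ⊆ Z(G), where AB := {ab | a ∈ A, b ∈ B}. Then for all g, h ∈ G, |Ag ∩ h⁻¹B| = |Ah ∩ g⁻¹B|, where h⁻¹B := {h⁻¹b | b ∈ B}. -/
private lemma aux_mem {G : Type*} [Group G] [DecidableEq G]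
    (A B : Finset G)
    (hAB : ∀ a ∈ A, ∀ b ∈ B, a * b ∈ Subgroup.center G)
    (g h x : G)
    (hx : x ∈ A.image (· * g) ∩ B.image (h⁻¹ * ·)) :
    x * (g⁻¹ * h) ∈ A.image (· * h) ∩ B.image (g⁻¹ * ·) := by
  simp only [Finset.mem_inter, Finset.mem_image] at hx ⊢
  obtain ⟨⟨a, ha, hag⟩, b, hb, hbx⟩ := hx
  have hc := (Subgroup.mem_center_iff.mp (hAB a ha b hb)) x
  have hxa : a = x * g⁻¹ := by rw [← hag]; group
  have hxb : b = h * x := by rw [← hbx]; group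
  have comm : x * (g⁻¹ * h) = g⁻¹ * h * x := by
    rw [hxa, hxb] at hc
    -- hc : x * (x * g⁻¹ * (h * x)) = x * g⁻¹ * (h * x) * x
    have h1 : x * (x * (g⁻¹ * (h * x)))= x * (g⁻¹ * (h * x) * x) := by
      rw [← mul_assoc x (g⁻¹ * (h * x)) x]
      simpa [mul_assoc] using hc
    have h2 := mul_left_cancel h1
    -- h2 : x * (g⁻¹ * (h * x)) = g⁻¹ * (h * x) * x
    calc x * (g⁻¹ * h) = x * (g⁻¹ * (h * x)) * x⁻¹ := by group
      _ = g⁻¹ * (h * x) * x * x⁻¹ := by rw [h2]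
      _ = g⁻¹ * h * x := by group
  constructor
  · exact ⟨a, ha, by rw [hxa]; group⟩
  · exact ⟨b, hb, by rw [hxb, comm]; group⟩

theorem stmt_3 {G : Type*} [Group G] [Fintype G] [DecidableEq G]
    (A B : Finset G)
    (hAB : ∀ a ∈ A, ∀ b ∈ B, a * b ∈ Subgroup.center G) :
    ∀ g h : G,
      (A.image (· * g) ∩ B.image (h⁻¹ * ·)).card
        = (A.image (· * h) ∩ B.image (g⁻¹ * ·)).card := by
  intro g h
  apply Finset.card_bij (fun x _ => x * (g⁻¹ * h))
  · intro x hx; exact aux_mem A B hAB g h x hx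
  · intro x hx y hy hxy; exact mul_right_cancel hxy
  · intro y hy
    refine ⟨y * (h⁻¹ * g), aux_mem A B hAB h g y hy, by group⟩
end

section
/- Let G be a finite group and let A, B ⊆ G be normal subsets of G. Then for all g, h ∈ G, |Ag ∩ Bh⁻¹| = |Ah ∩ Bg⁻¹|. -/
theorem stmt_7 {G : Type*} [Group G] [Fintype G] [DecidableEq G]
    (A B : Finset G)
    (hA : ∀ g : G, A.image (fun a => g * a * g⁻¹) = A)
    (hB : ∀ g : G, B.image (fun b => g * b * g⁻¹) = B) :
    ∀ g h : G,
      (A.image (· * g) ∩ B.image (· * h⁻¹)).card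
        = (A.image (· * h) ∩ B.image (· * g⁻¹)).card := by
  have hA' : ∀ (g a : G), a ∈ A → g * a * g⁻¹ ∈ A := fun g a ha => by
    rw [← hA g]; exact Finset.mem_image_of_mem _ ha
  have hB' : ∀ (g b : G), b ∈ B → g * b * g⁻¹ ∈ B := fun g b hb => by
    rw [← hB g]; exact Finset.mem_image_of_mem _ hb
  have key : ∀ (g h x : G),
      x ∈ (A.image (· * g) ∩ B.image (· * h⁻¹)) ↔ x * g⁻¹ ∈ A ∧ x * h ∈ B := by
    intro g h x
    simp only [Finset.mem_inter, Finset.mem_image]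
    constructor
    · rintro ⟨⟨a, ha, rfl⟩, ⟨b, hb, hbx⟩⟩
      refine ⟨by simpa using ha, ?_⟩
      have : b = a * g * h := by
        have := congrArg (· * h) hbx; simpa [mul_assoc] using this
      simpa [this, mul_assoc] using hb
    · rintro ⟨h1, h2⟩
      exact ⟨⟨x * g⁻¹, h1, by simp⟩, ⟨x * h, h2, by simp [mul_assoc]⟩⟩
  intro g h
  apply Finset.card_bij (fun x _ => g⁻¹ * x * h)
  · intro x hx
    rw [key] at hx ⊢
    obtain ⟨h1, h2⟩ := hx
    constructor
    · have := hA' g⁻¹ _ h1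
      simpa [mul_assoc] using this
    · have := hB' g⁻¹ _ h2
      simpa [mul_assoc] using this
  · intro a _ b _ hab
    have := congrArg (fun z => g * z * h⁻¹) hab
    simpa [mul_assoc] using this
  · intro y hy
    refine ⟨g * y * h⁻¹, ?_, by group⟩
    rw [key] at hy ⊢
    obtain ⟨h1, h2⟩ := hy
    constructor
    · have := hA' g _ h1
      simpa [mul_assoc] using this
    · have := hB' g _ h2
      simpa [mul_assoc] using this
end
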